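/- arXiv:1604.01176 — 2 statements merged into one kernel-verified Lean document; each statement's English description precedes it below -/
import Mathlib

section
/- Let A be a commutative unital topological algebra in which the set of invertible elements A⁻¹ is open (a Q-algebra). Then usr A ≤ tsr A: if the set of invertible n-tuples U_n(A) is dense in Aⁿ, then for every invertible (n+1)-tuple (a, b) ∈ Aⁿ × A there exists w ∈ U_n(A) such that a + w·b ∈ U_n(A). -/
/-!
Write `∑ xⱼ aⱼ + y b = 1`. Since units are open and `Uₙ(A)` is dense, `x` can be moved to a
unimodular `x'` with `∑ x'ⱼ aⱼ + y b` still a unit; if `∑ sⱼ x'ⱼ = 1`, then `w₀ = y s` satisfies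
`∑ x'ⱼ (aⱼ + w₀ⱼ b) = ∑ x'ⱼ aⱼ + y b`. A second perturbation moves `w₀` to a unimodular `w` with
`∑ x'ⱼ (aⱼ + wⱼ b)` still a unit, which makes `a + w b` unimodular.
-/

open Finset

def IsUnimodular {R ι : Type*} [CommSemiring R] [Fintype ι] (f : ι → R) : Prop :=
  ∃ x : ι → R, ∑ j, x j * f j = 1

theorem IsUnimodular.of_isUnit_sum_mul {R ι : Type*} [CommSemiring R] [Fintype ι]
    {f x : ι → R} (h : IsUnit (∑ j, x j * f j)) : IsUnimodular f := by
  obtain ⟨u, hu⟩ := h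
  refine ⟨fun j => ↑u⁻¹ * x j, ?_⟩
  simp_rw [mul_assoc, ← mul_sum, ← hu, Units.inv_mul]

theorem sum_mul_add_mul_mul_eq {R ι : Type*} [CommSemiring R] [Fintype ι]
    {x s : ι → R} (hs : ∑ j, s j * x j = 1) (a : ι → R) (y b : R) :
    ∑ j, x j * (a j + y * s j * b) = ∑ j, x j * a j + y * b := by
  calc ∑ j, x j * (a j + y * s j * b) = ∑ j, x j * a j + y * b * ∑ j, s j * x j := by
        rw [mul_sum, ← sum_add_distrib]
        exact sum_congr rfl fun j _ => by ring
    _ = ∑ j, x j * a j + y * b := by rw [hs, mul_one]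

theorem Dense.exists_mem_isUnit_of_continuous {X R : Type*} [TopologicalSpace X]
    [Monoid R] [TopologicalSpace R] (hR : IsOpen {r : R | IsUnit r}) {S : Set X} (hS : Dense S)
    {φ : X → R} (hφ : Continuous φ) {x₀ : X} (hx₀ : IsUnit (φ x₀)) :
    ∃ x ∈ S, IsUnit (φ x) :=
  hS.exists_mem_open (hR.preimage hφ) ⟨x₀, hx₀⟩

theorem stmt3_general (A : Type*) [CommRing A]
    [TopologicalSpace A] [IsTopologicalRing A]
    (hQ : IsOpen {a : A | IsUnit a}) (n : ℕ)
    (htsr : Dense {f : Fin n → A | ∃ x : Fin n → A, ∑ j, x j * f j = 1})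
    (a : Fin n → A) (b : A)
    (hab : ∃ (x : Fin n → A) (y : A), ∑ j, x j * a j + y * b = 1) :
    ∃ w : Fin n → A, (∃ x : Fin n → A, ∑ j, x j * w j = 1) ∧
      (∃ x : Fin n → A, ∑ j, x j * (a j + w j * b) = 1) := by
  obtain ⟨x, y, hxy⟩ := hab
  obtain ⟨x', ⟨s, hs⟩, hx'⟩ := htsr.exists_mem_isUnit_of_continuous hQ
    (φ := fun x' => ∑ j, x' j * a j + y * b) (by fun_prop) (x₀ := x) (by simp [hxy])
  obtain ⟨w, hw, hw'⟩ := htsr.exists_mem_isUnit_of_continuous hQ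
    (φ := fun w => ∑ j, x' j * (a j + w j * b)) (by fun_prop) (x₀ := fun j => y * s j)
    (by rwa [sum_mul_add_mul_mul_eq hs])
  exact ⟨w, hw, IsUnimodular.of_isUnit_sum_mul hw'⟩

/-- For a commutative unital topological algebra `A` with open group of units (a Q-algebra):
if the invertible `n`-tuples are dense in `Aⁿ` (i.e. `tsr A ≤ n`), then every invertible
`(n+1)`-tuple `(a, b)` admits a unimodular `w` with `a + w·b` unimodular (`usr A ≤ tsr A`). -/
theorem stmt3 (𝕜 : Type*) [RCLike 𝕜] (A : Type*) [CommRing A] [Algebra 𝕜 A]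
    [TopologicalSpace A] [IsTopologicalRing A]
    (hQ : IsOpen {a : A | IsUnit a}) (n : ℕ)
    (htsr : Dense {f : Fin n → A | ∃ x : Fin n → A, ∑ j, x j * f j = 1})
    (a : Fin n → A) (b : A)
    (hab : ∃ (x : Fin n → A) (y : A), ∑ j, x j * a j + y * b = 1) :
    ∃ w : Fin n → A, (∃ x : Fin n → A, ∑ j, x j * w j = 1) ∧
      (∃ x : Fin n → A, ∑ j, x j * (a j + w j * b) = 1) :=
  stmt3_general A hQ n htsr a b hab
end

section
/- Let X be a compact Hausdorff space and A = C(X, 𝕂). If tsr A = n < ∞, then nor A ≤ n: for every invertible (n+1)-tuple (f, g) ∈ Aⁿ × A there exists v ∈ Aⁿ with ‖v_j‖_∞ = 1 for each j such that f + v·g is an invertible n-tuple (the functions f_j + v_j g have no common zero). -/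
/-!
Approximate `f` by an invertible tuple `h` (this is where `tsr A ≤ n` enters) and put
`v₀ = (h - f) * w`, where `w` is an inverse of `g` truncated at level `δ`: where `‖g‖ ≥ δ` we have
`w * g = 1`, so `f + v₀ * g = h` there, while where `‖g‖ < δ` the tuple `f` is bounded below and
`v₀ * g` is too small to cancel it. This gives `‖v₀ j‖ ≤ 1`, and it remains to reach norm one.
If `g` vanishes at `x₀`, push `v₀` towards `1` with an Urysohn bump at `x₀` supported where `g` is
small; this barely changes `v * g`. If `g` vanishes nowhere, move `v₀ j` along `k j / g`, which
rescales the `j`-th entry of `f + v₀ * g`, until the norm is one (intermediate value theorem).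
-/

open ComplexConjugate

section

variable {X 𝕜 ι : Type*} [TopologicalSpace X] [RCLike 𝕜]

/-- The tuples with no common zero are the invertible tuples `Uₙ(A)` of `A = C(X, 𝕜)`. -/
def NoCommonZero (u : ι → C(X, 𝕜)) : Prop := ∀ x, ∃ i, u i x ≠ 0

theorem add_ne_zero_of_norm_lt {E : Type*} [SeminormedAddGroup E] {a b : E} (h : ‖b‖ < ‖a‖) :
    a + b ≠ 0 := by
  intro hab
  rw [eq_neg_of_add_eq_zero_left hab, norm_neg] at h
  exact lt_irrefl _ h

theorem exists_pos_le_norm_of_ne_zero {E : Type*} [NormedAddCommGroup E] [CompactSpace X]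
    {F : X → E} (hF : Continuous F) (h : ∀ x, F x ≠ 0) : ∃ c > 0, ∀ x, c ≤ ‖F x‖ := by
  obtain ⟨c, hc, hle⟩ := isCompact_univ.exists_forall_le' hF.norm.continuousOn
    (a := 0) fun x _ => norm_pos_iff.2 (h x)
  exact ⟨c, hc, fun x => hle x trivial⟩

theorem exists_le_norm_apply_of_le_pi_norm {E : Type*} [SeminormedAddGroup E] [Fintype ι]
    {c : ℝ} (hc : 0 < c) {a : ι → E} (h : c ≤ ‖a‖) : ∃ i, c ≤ ‖a i‖ := by
  by_contra! h'
  exact ((pi_norm_lt_iff hc).2 h').not_ge h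

theorem NoCommonZero.exists_pos_le_norm [Fintype ι] [CompactSpace X] {u : ι → C(X, 𝕜)}
    (hu : NoCommonZero u) : ∃ β > 0, ∀ x, ∃ i, β ≤ ‖u i x‖ := by
  obtain ⟨β, hβ, hle⟩ := exists_pos_le_norm_of_ne_zero (F := fun x i => u i x) (by fun_prop)
    fun x h0 => (hu x).elim fun i hi => hi (congrFun h0 i)
  exact ⟨β, hβ, fun x => exists_le_norm_apply_of_le_pi_norm hβ (hle x)⟩

theorem exists_nonneg_norm_add_smul_eq {E : Type*} [NormedAddCommGroup E] [NormedSpace ℝ E]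
    {a b : E} {r : ℝ} (ha : ‖a‖ ≤ r) (hb : b ≠ 0) : ∃ t : ℝ, 0 ≤ t ∧ ‖a + t • b‖ = r := by
  have hb' : 0 < ‖b‖ := norm_pos_iff.2 hb
  have hr : 0 ≤ r := (norm_nonneg a).trans ha
  set T := 2 * r / ‖b‖
  have hT : r ≤ ‖a + T • b‖ := calc
    r ≤ T * ‖b‖ - ‖a‖ := by rw [div_mul_cancel₀ _ hb'.ne']; linarith
    _ = ‖T • b‖ - ‖a‖ := by rw [norm_smul, Real.norm_of_nonneg (by positivity)]
    _ ≤ ‖a + T • b‖ := by simpa [add_comm] using norm_sub_norm_le (T • b) (-a)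
  obtain ⟨t, ht, hteq⟩ := intermediate_value_Icc (by positivity : (0 : ℝ) ≤ T)
    (by fun_prop : Continuous fun t : ℝ => ‖a + t • b‖).continuousOn
    ⟨by simpa using ha, hT⟩
  exact ⟨t, ht.1, hteq⟩

namespace ContinuousMap

noncomputable def truncInv (g : C(X, 𝕜)) {δ : ℝ} (hδ : 0 < δ) : C(X, 𝕜) where
  toFun x := conj (g x) / ((max ‖g x‖ δ : ℝ) : 𝕜) ^ 2
  continuous_toFun := by
    refine (RCLike.continuous_conj.comp g.continuous).div (by fun_prop) fun x => ?_
    exact pow_ne_zero 2 (RCLike.ofReal_ne_zero.2 (lt_max_of_lt_right hδ).ne')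

variable (g : C(X, 𝕜)) {δ : ℝ} (hδ : 0 < δ) (x : X)

theorem norm_truncInv_apply : ‖truncInv g hδ x‖ = ‖g x‖ / max ‖g x‖ δ ^ 2 := by
  simp [truncInv, norm_pow, abs_of_pos (lt_max_of_lt_right hδ)]

theorem norm_truncInv_apply_le : ‖truncInv g hδ x‖ ≤ δ⁻¹ := by
  have hm : 0 < max ‖g x‖ δ := lt_max_of_lt_right hδ
  calc ‖truncInv g hδ x‖ = ‖g x‖ / max ‖g x‖ δ ^ 2 := norm_truncInv_apply g hδ x
    _ ≤ max ‖g x‖ δ / max ‖g x‖ δ ^ 2 := by gcongr; exact le_max_left _ _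
    _ = (max ‖g x‖ δ)⁻¹ := by field_simp
    _ ≤ δ⁻¹ := inv_anti₀ hδ (le_max_right _ _)

theorem norm_truncInv_le [CompactSpace X] : ‖truncInv g hδ‖ ≤ δ⁻¹ :=
  (norm_le _ (by positivity)).2 (norm_truncInv_apply_le g hδ)

theorem norm_truncInv_apply_mul_le : ‖truncInv g hδ x * g x‖ ≤ 1 := by
  have hm : 0 < max ‖g x‖ δ := lt_max_of_lt_right hδ
  rw [norm_mul, norm_truncInv_apply, div_mul_eq_mul_div, div_le_one (by positivity), ← sq]
  gcongr
  exact le_max_left _ _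

theorem truncInv_apply_mul_of_le (hx : δ ≤ ‖g x‖) : truncInv g hδ x * g x = 1 := by
  have hg : g x ≠ 0 := norm_pos_iff.1 (hδ.trans_le hx)
  simp only [truncInv, ContinuousMap.coe_mk, max_eq_left hx]
  rw [div_mul_eq_mul_div, mul_comm, RCLike.mul_conj]
  exact div_self (pow_ne_zero 2 (RCLike.ofReal_ne_zero.2 (norm_ne_zero_iff.2 hg)))

end ContinuousMap

theorem exists_norm_le_one_noCommonZero_add_mul [Fintype ι] [CompactSpace X]
    (hdense : Dense {h : ι → C(X, 𝕜) | NoCommonZero h}) {f : ι → C(X, 𝕜)} {g : C(X, 𝕜)}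
    (hfg : ∀ x, (∃ j, f j x ≠ 0) ∨ g x ≠ 0) :
    ∃ v : ι → C(X, 𝕜), (∀ j, ‖v j‖ ≤ 1) ∧ NoCommonZero fun j => f j + v j * g := by
  obtain ⟨c, hc, hfgc⟩ := exists_pos_le_norm_of_ne_zero (F := fun x => (fun j => f j x, g x))
    (by fun_prop) fun x h0 => by
      rcases hfg x with ⟨j, hj⟩ | hg
      exacts [hj (congrFun (congrArg Prod.fst h0) j), hg (congrArg Prod.snd h0)]
  obtain ⟨h, hh, hdist⟩ := hdense.exists_dist_lt f (by positivity : 0 < c / 4)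
  have hhf : ∀ j, ‖h j - f j‖ < c / 4 := fun j => by
    simpa only [dist_eq_norm'] using (dist_pi_lt_iff (by positivity)).1 hdist j
  set w := g.truncInv (half_pos hc)
  refine ⟨fun j => (h j - f j) * w, fun j => ?_, fun x => ?_⟩
  · calc ‖(h j - f j) * w‖ ≤ ‖h j - f j‖ * ‖w‖ := norm_mul_le _ _
      _ ≤ c / 4 * (c / 2)⁻¹ := by
          gcongr
          exacts [(hhf j).le, g.norm_truncInv_le _]
      _ ≤ 1 := by field_simp; linarith
  by_cases hgx : c / 2 ≤ ‖g x‖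
  · obtain ⟨j, hj⟩ := hh x
    refine ⟨j, ?_⟩
    have hwg : w x * g x = 1 := g.truncInv_apply_mul_of_le _ x hgx
    simpa [mul_assoc, hwg] using hj
  obtain ⟨j, hj⟩ : ∃ j, c ≤ ‖f j x‖ := by
    refine exists_le_norm_apply_of_le_pi_norm hc ((le_max_iff.1 (hfgc x)).resolve_right ?_)
    linarith
  refine ⟨j, add_ne_zero_of_norm_lt ?_⟩
  calc ‖((h j - f j) * w) x * g x‖ = ‖(h j - f j) x‖ * ‖w x * g x‖ := by
        rw [ContinuousMap.mul_apply, mul_assoc, norm_mul]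
    _ ≤ c / 4 * 1 := by
        gcongr
        exacts [((h j - f j).norm_coe_le_norm x).trans (hhf j).le, g.norm_truncInv_apply_mul_le _ x]
    _ < ‖f j x‖ := by linarith

theorem NoCommonZero.exists_norm_eq_one_of_apply_eq_zero [Fintype ι] [CompactSpace X]
    [T2Space X] {f v₀ : ι → C(X, 𝕜)} {g : C(X, 𝕜)} (hv₀ : ∀ j, ‖v₀ j‖ ≤ 1)
    (hu : NoCommonZero fun j => f j + v₀ j * g) {x₀ : X} (hx₀ : g x₀ = 0) :
    ∃ v : ι → C(X, 𝕜), (∀ j, ‖v j‖ = 1) ∧ NoCommonZero fun j => f j + v j * g := by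
  obtain ⟨β, hβ, hu⟩ := hu.exists_pos_le_norm
  obtain ⟨ψ, hψ0, hψ1, hψ⟩ := exists_continuous_zero_one_of_isClosed
    (isClosed_le continuous_const g.continuous.norm : IsClosed {x | β / 2 ≤ ‖g x‖})
    (isClosed_singleton (x := x₀)) (Set.disjoint_singleton_right.2 (by simp [hx₀, hβ]))
  let v : ι → C(X, 𝕜) := fun j => ⟨fun x => (1 - ψ x) * v₀ j x + ψ x, by fun_prop⟩
  have hv₀x : ∀ j x, ‖v₀ j x‖ ≤ 1 := fun j x => ((v₀ j).norm_coe_le_norm x).trans (hv₀ j)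
  have hvx : ∀ j x, ‖v j x‖ ≤ 1 := fun j x => by
    obtain ⟨h0, h1⟩ := hψ x
    calc ‖v j x‖ ≤ (1 - ψ x) * ‖v₀ j x‖ + ψ x := by
          refine (norm_add_le _ _).trans ?_
          rw [norm_mul, ← RCLike.ofReal_one, ← RCLike.ofReal_sub, RCLike.norm_ofReal,
            RCLike.norm_ofReal, abs_of_nonneg (by linarith), abs_of_nonneg h0]
      _ ≤ (1 - ψ x) * 1 + ψ x := by gcongr; exact hv₀x j x
      _ = 1 := by ring
  refine ⟨v, fun j => le_antisymm ((ContinuousMap.norm_le _ zero_le_one).2 (hvx j)) ?_,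
    fun x => ?_⟩
  · have : v j x₀ = 1 := by simp [v, hψ1 (Set.mem_singleton x₀)]
    simpa [this] using (v j).norm_coe_le_norm x₀
  obtain ⟨j, hj⟩ := hu x
  refine ⟨j, ?_⟩
  have hsmall : ‖(v j x - v₀ j x) * g x‖ < β := by
    by_cases hgx : β / 2 ≤ ‖g x‖
    · simp [v, hψ0 hgx, hβ]
    · calc ‖(v j x - v₀ j x) * g x‖ ≤ (1 + 1) * ‖g x‖ := by
            rw [norm_mul]; gcongr; exact (norm_sub_le _ _).trans (add_le_add (hvx j x) (hv₀x j x))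
        _ < β := by linarith
  have : (f j + v j * g) x = (f j + v₀ j * g) x + (v j x - v₀ j x) * g x := by
    simp only [ContinuousMap.add_apply, ContinuousMap.mul_apply]; ring
  rw [this]
  exact add_ne_zero_of_norm_lt (hsmall.trans_le hj)

theorem NoCommonZero.exists_norm_eq_one_of_forall_ne_zero [Nonempty X] [CompactSpace X]
    {f v₀ : ι → C(X, 𝕜)} {g : C(X, 𝕜)} (hv₀ : ∀ j, ‖v₀ j‖ ≤ 1)
    (hu : NoCommonZero fun j => f j + v₀ j * g) (hg : ∀ x, g x ≠ 0) :
    ∃ v : ι → C(X, 𝕜), (∀ j, ‖v j‖ = 1) ∧ NoCommonZero fun j => f j + v j * g := by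
  classical
  have hgu : IsUnit g := (ContinuousMap.isUnit_iff_forall_ne_zero g).2 hg
  -- moving `v₀ j` by `t • k j / g` turns `f j + v₀ j * g` into `(1 + t) • (f j + v₀ j * g)`,
  -- or into the constant `t` when `f j + v₀ j * g = 0`, where no rescaling would help
  let k : ι → C(X, 𝕜) := fun j => if f j + v₀ j * g = 0 then 1 else f j + v₀ j * g
  have hk : ∀ j, k j ≠ 0 := fun j => by
    by_cases h : f j + v₀ j * g = 0 <;> simp [k, h]
  have hkg : ∀ j, k j * ↑hgu.unit⁻¹ * g = k j := fun j => by
    rw [mul_assoc, hgu.val_inv_mul, mul_one]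
  have hex : ∀ j, ∃ t : ℝ, 0 ≤ t ∧ ‖v₀ j + t • (k j * ↑hgu.unit⁻¹)‖ = 1 := fun j =>
    exists_nonneg_norm_add_smul_eq (hv₀ j) fun h0 => hk j (by rw [← hkg j, h0, zero_mul])
  choose t ht0 ht using hex
  refine ⟨fun j => v₀ j + t j • (k j * ↑hgu.unit⁻¹), fun j => ?_, fun x => ?_⟩
  · exact ht j
  obtain ⟨j, hj⟩ : ∃ j, (f j + v₀ j * g) x ≠ 0 := hu x
  have hkj : k j = f j + v₀ j * g :=
    if_neg fun h0 => hj (by simp only [h0, ContinuousMap.zero_apply])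
  refine ⟨j, ?_⟩
  have : f j + (v₀ j + t j • (k j * ↑hgu.unit⁻¹)) * g = (1 + t j) • (f j + v₀ j * g) := by
    rw [add_mul, smul_mul_assoc, hkg, hkj, ← add_assoc, add_smul, one_smul]
  dsimp only
  rw [this, ContinuousMap.smul_apply]
  exact smul_ne_zero (by linarith [ht0 j]) hj

end

/-- For `A = C(X, 𝕜)` with `X` compact Hausdorff: if `tsr A ≤ n` (invertible `n`-tuples
dense), then `nor A ≤ n`: every invertible `(n+1)`-tuple `(f, g)` admits `v ∈ Aⁿ` with
`‖v_j‖_∞ = 1` such that `f + v·g` has no common zero. -/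
theorem stmt8 (𝕜 : Type*) [RCLike 𝕜] (X : Type*) [TopologicalSpace X] [CompactSpace X]
    [T2Space X] [Nonempty X] (n : ℕ)
    (htsr : Dense {f : Fin n → C(X, 𝕜) | ∀ x : X, ∃ j, f j x ≠ 0})
    (f : Fin n → C(X, 𝕜)) (g : C(X, 𝕜))
    (hfg : ∀ x : X, (∃ j, f j x ≠ 0) ∨ g x ≠ 0) :
    ∃ v : Fin n → C(X, 𝕜), (∀ j, ‖v j‖ = 1) ∧
      ∀ x : X, ∃ j, (f j + v j * g) x ≠ 0 := by
  obtain ⟨v₀, hv₀, hu⟩ := exists_norm_le_one_noCommonZero_add_mul htsr hfg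
  by_cases hg : ∃ x₀, g x₀ = 0
  · obtain ⟨x₀, hx₀⟩ := hg
    exact hu.exists_norm_eq_one_of_apply_eq_zero hv₀ hx₀
  · exact hu.exists_norm_eq_one_of_forall_ne_zero hv₀ fun x hx => hg ⟨x, hx⟩
end
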